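/- Let G = ℤ/2 × ℤ/2 with generators α and h, and let M = ℤ[G]/(αh − α + h − 1) with quotient map ε : ℤ[G] → M. Then: the G-fixed points M^G and the ⟨α⟩-fixed points M^{⟨α⟩} both equal the ℤ-span of ε(1 + α); the ⟨h⟩-fixed points M^{⟨h⟩} equal the ℤ-span of {ε(αh − 1), ε(1 + α)}; and the ⟨αh⟩-fixed points M^{⟨αh⟩} equal the ℤ-span of {ε(h − 1), ε(1 + α)}. -/

import Mathlib

/-- The Klein four-group `G = ℤ/2 × ℤ/2` (written multiplicatively). -/
abbrev KleinFour : Type := Multiplicative (ZMod 2) × Multiplicative (ZMod 2)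

/-- The generator `α` of the first `ℤ/2` factor. -/
def gα : KleinFour := (Multiplicative.ofAdd 1, 1)

/-- The generator `h` of the second `ℤ/2` factor. -/
def gh : KleinFour := (1, Multiplicative.ofAdd 1)

/-- The integral group ring `ℤ[ℤ/2 × ℤ/2]`. -/
abbrev GrpRing : Type := MonoidAlgebra ℤ KleinFour

/-- The element `αh − α + h − 1` of `ℤ[ℤ/2 × ℤ/2]`. -/
noncomputable def relEl : GrpRing :=
  MonoidAlgebra.single (gα * gh) 1 - MonoidAlgebra.single gα 1 + MonoidAlgebra.single gh 1 - 1

/-- The module `M = ℤ[G]/(αh − α + h − 1)`. -/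
abbrev Mq : Type := GrpRing ⧸ Ideal.span {relEl}

/-- The quotient map `ε : ℤ[G] → M`. -/
noncomputable def εq : GrpRing →+* Mq := Ideal.Quotient.mk (Ideal.span {relEl})

/-- The `H`-fixed points of `M`, as an additive subgroup. -/
noncomputable def fixMq (H : Subgroup KleinFour) : AddSubgroup Mq where
  carrier := {m | ∀ σ ∈ H, (MonoidAlgebra.single σ (1 : ℤ) : GrpRing) • m = m}
  zero_mem' := fun σ _ => smul_zero _
  add_mem' := fun ha hb σ hσ => by rw [smul_add, ha σ hσ, hb σ hσ]
  neg_mem' := fun ha σ hσ => by rw [smul_neg, ha σ hσ]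

open MonoidAlgebra

lemma klein_cases : ∀ g : KleinFour, g = 1 ∨ g = gα ∨ g = gh ∨ g = gα * gh := by decide

lemma decomp (f : GrpRing) : f = single 1 (f.coeff 1) + single gα (f.coeff gα)
    + single gh (f.coeff gh) + single (gα*gh) (f.coeff (gα*gh)) := by
  apply MonoidAlgebra.ext; apply Finsupp.ext; intro g
  simp only [MonoidAlgebra.coeff_add, MonoidAlgebra.coeff_single]
  rw [Finsupp.add_apply, Finsupp.add_apply, Finsupp.add_apply,
      Finsupp.single_apply, Finsupp.single_apply, Finsupp.single_apply, Finsupp.single_apply]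
  rcases klein_cases g with rfl|rfl|rfl|rfl <;> simp (config := { decide := true })

lemma zsmul_relEl (c : ℤ) : c • relEl =
    single (gα*gh) c - single gα c + single gh c - single 1 c := by
  simp [relEl, one_def, smul_sub, smul_add, MonoidAlgebra.smul_single']

lemma relEl_mul_single (g : KleinFour) (c : ℤ) :
    ∃ n : ℤ, relEl * single g c = n • relEl := by
  rcases klein_cases g with rfl|rfl|rfl|rfl
  · exact ⟨c, by rw [zsmul_relEl]; simp [relEl, one_def, sub_mul, add_mul,
      MonoidAlgebra.single_mul_single]⟩
  · refine ⟨c, ?_⟩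
    rw [zsmul_relEl]
    simp only [relEl, one_def, sub_mul, add_mul, MonoidAlgebra.single_mul_single,
      one_mul, mul_one,
      show gα*gh*gα = gh by decide, show gα*gα = (1:KleinFour) by decide,
      show gh*gα = gα*gh by decide, show (1:KleinFour)*gα = gα by decide]
    abel_nf
    try simp [sub_eq_add_neg]
    try abel
  · refine ⟨-c, ?_⟩
    rw [zsmul_relEl]
    simp only [relEl, one_def, sub_mul, add_mul, MonoidAlgebra.single_mul_single,
      one_mul, mul_one, Finsupp.single_neg,
      show gα*gh*gh = gα by decide, show gh*gh = (1:KleinFour) by decide,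
      show (1:KleinFour)*gh = gh by decide]
    abel_nf
    try simp [sub_eq_add_neg]
    try abel
  · refine ⟨-c, ?_⟩
    rw [zsmul_relEl]
    simp only [relEl, one_def, sub_mul, add_mul, MonoidAlgebra.single_mul_single,
      one_mul, mul_one, Finsupp.single_neg,
      show gα*gh*(gα*gh) = (1:KleinFour) by decide, show gα*(gα*gh) = gh by decide,
      show gh*(gα*gh) = gα by decide, show (1:KleinFour)*(gα*gh) = gα*gh by decide]
    abel_nf
    try simp [sub_eq_add_neg]
    try abel

lemma relEl_mul (r : GrpRing) : ∃ n : ℤ, relEl * r = n • relEl := by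
  induction r using MonoidAlgebra.induction_linear with
  | zero => exact ⟨0, by simp⟩
  | add f g hf hg =>
    obtain ⟨n, hn⟩ := hf; obtain ⟨m, hm⟩ := hg
    exact ⟨n + m, by rw [mul_add, hn, hm, add_smul]⟩
  | single g c => exact relEl_mul_single g c

lemma mem_span_iff (x : GrpRing) :
    x ∈ Ideal.span {relEl} ↔ ∃ n : ℤ, x = n • relEl := by
  rw [Ideal.mem_span_singleton]
  constructor
  · rintro ⟨r, rfl⟩; exact relEl_mul r
  · rintro ⟨n, rfl⟩
    exact ⟨(n : GrpRing), by rw [zsmul_eq_mul, mul_comm]⟩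

lemma grp_sub_apply (x y : GrpRing) (g : KleinFour) : (x - y).coeff g = x.coeff g - y.coeff g := rfl
lemma grp_add_apply (x y : GrpRing) (g : KleinFour) : (x + y).coeff g = x.coeff g + y.coeff g := rfl

lemma span_coeffs {s : GrpRing} (hs : s ∈ Ideal.span {relEl}) :
    s.coeff 1 + s.coeff (gα*gh) = 0 ∧ s.coeff gα + s.coeff (gα*gh) = 0 ∧ s.coeff gh - s.coeff (gα*gh) = 0 := by
  obtain ⟨n, rfl⟩ := (mem_span_iff s).mp hs
  rw [zsmul_relEl]
  refine ⟨?_, ?_, ?_⟩ <;>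
    simp (config := { decide := true }) [grp_sub_apply, grp_add_apply, Finsupp.single_apply]

lemma eps_smul (r x : GrpRing) : r • εq x = εq (r * x) := rfl

lemma eps_relEl : εq relEl = 0 := by
  apply Ideal.Quotient.eq_zero_iff_mem.mpr
  exact Ideal.subset_span rfl

lemma eps_single_aha : εq (single (gα*gh) 1) = εq (single gα 1) - εq (single gh 1) + 1 := by
  have h : εq (single (gα*gh) 1 - single gα 1 + single gh 1 - 1) = 0 := eps_relEl
  rw [map_sub, map_add, map_sub, map_one] at h
  linear_combination (norm := ring_nf) h

lemma eps_single_smul (g : KleinFour) (c : ℤ) :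
    εq (single g c) = c • εq (single g 1) := by
  rw [← map_zsmul, MonoidAlgebra.smul_single', mul_one]

lemma eps_rep (f : GrpRing) :
    εq f = (f.coeff 1 + f.coeff (gα*gh)) • (1 : Mq) + (f.coeff gα + f.coeff (gα*gh)) • εq (single gα 1)
      + (f.coeff gh - f.coeff (gα*gh)) • εq (single gh 1) := by
  conv_lhs => rw [decomp f]
  rw [map_add, map_add, map_add, eps_single_smul 1 (f.coeff 1), eps_single_smul gα (f.coeff gα),
    eps_single_smul gh (f.coeff gh), eps_single_smul (gα*gh) (f.coeff (gα*gh)), eps_single_aha]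
  have h1 : εq (single 1 1) = 1 := by rw [← one_def, map_one]
  rw [h1]
  module

lemma klein_inv : ∀ g : KleinFour, g⁻¹ = g := by decide

lemma act_coeff (σ g : KleinFour) (f : GrpRing) : (single σ 1 * f : GrpRing).coeff g = f.coeff (σ * g) := by
  rw [MonoidAlgebra.coeff_single_mul_apply, one_mul, klein_inv]

lemma mem_fixMq {H : Subgroup KleinFour} {m : Mq} :
    m ∈ fixMq H ↔ ∀ σ ∈ H, (single σ (1:ℤ) : GrpRing) • m = m := Iff.rfl

lemma fix_of_mem {σ : KleinFour} {x : GrpRing}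
    (h : single σ 1 * x - x ∈ Ideal.span {relEl}) : (single σ (1:ℤ) : GrpRing) • εq x = εq x := by
  rw [eps_smul]; exact Ideal.Quotient.eq.mpr h

lemma mem_fix_zpowers {g : KleinFour} (hg : g * g = 1) {m : Mq}
    (h : (single g (1:ℤ) : GrpRing) • m = m) : m ∈ fixMq (Subgroup.zpowers g) := by
  rw [mem_fixMq]
  rintro σ hσ
  obtain ⟨k, rfl⟩ := hσ
  rcases Int.even_or_odd k with ⟨t, rfl⟩ | ⟨t, rfl⟩
  · have h2 : g ^ (t + t) = 1 := by
      rw [zpow_add, ← mul_zpow, hg, one_zpow]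
    show (single (g ^ (t + t)) (1:ℤ) : GrpRing) • m = m
    rw [h2, ← one_def, one_smul]
  · have h2 : g ^ (2 * t + 1) = g := by
      rw [zpow_add, zpow_one, zpow_mul, show (g:KleinFour)^(2:ℤ) = g * g from zpow_two g, hg,
        one_zpow, one_mul]
    show (single (g ^ (2 * t + 1)) (1:ℤ) : GrpRing) • m = m
    rw [h2, h]

lemma fix_v_a : (single gα (1:ℤ) : GrpRing) • εq (1 + single gα 1) = εq (1 + single gα 1) := by
  apply fix_of_mem
  refine (mem_span_iff _).mpr ⟨0, ?_⟩
  rw [zero_smul]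
  simp only [mul_add, mul_one, MonoidAlgebra.single_mul_single, one_mul,
    show gα*gα = (1:KleinFour) by decide, ← one_def]
  abel

lemma fix_v_h : (single gh (1:ℤ) : GrpRing) • εq (1 + single gα 1) = εq (1 + single gα 1) := by
  apply fix_of_mem
  refine (mem_span_iff _).mpr ⟨1, ?_⟩
  rw [zsmul_relEl]
  simp only [mul_add, mul_one, MonoidAlgebra.single_mul_single, one_mul, one_def,
    show gh*gα = gα*gh by decide]
  abel

lemma fix_v_ah : (single (gα*gh) (1:ℤ) : GrpRing) • εq (1 + single gα 1)
    = εq (1 + single gα 1) := by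
  apply fix_of_mem
  refine (mem_span_iff _).mpr ⟨1, ?_⟩
  rw [zsmul_relEl]
  simp only [mul_add, mul_one, MonoidAlgebra.single_mul_single, one_mul, one_def,
    show (gα*gh)*gα = gh by decide]
  abel

lemma fix_u_h : (single gh (1:ℤ) : GrpRing) • εq (single (gα*gh) 1 - 1)
    = εq (single (gα*gh) 1 - 1) := by
  apply fix_of_mem
  refine (mem_span_iff _).mpr ⟨-1, ?_⟩
  rw [zsmul_relEl]
  simp only [mul_sub, mul_one, MonoidAlgebra.single_mul_single, one_mul, one_def,
    Finsupp.single_neg, show gh*(gα*gh) = gα by decide]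
  abel_nf
  try simp [sub_eq_add_neg]
  try abel

lemma fix_u_ah : (single (gα*gh) (1:ℤ) : GrpRing) • εq (single gh 1 - 1)
    = εq (single gh 1 - 1) := by
  apply fix_of_mem
  refine (mem_span_iff _).mpr ⟨-1, ?_⟩
  rw [zsmul_relEl]
  simp only [mul_sub, mul_one, MonoidAlgebra.single_mul_single, one_mul, one_def,
    Finsupp.single_neg, show (gα*gh)*gh = gα by decide]
  abel_nf
  try simp [sub_eq_add_neg]
  try abel

lemma fix_coeffs {σ : KleinFour} {f : GrpRing} (h : (single σ 1 : GrpRing) • εq f = εq f) :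
    (f.coeff (σ * 1) - f.coeff 1) + (f.coeff (σ * (gα*gh)) - f.coeff (gα*gh)) = 0 ∧
    (f.coeff (σ * gα) - f.coeff gα) + (f.coeff (σ * (gα*gh)) - f.coeff (gα*gh)) = 0 ∧
    (f.coeff (σ * gh) - f.coeff gh) - (f.coeff (σ * (gα*gh)) - f.coeff (gα*gh)) = 0 := by
  rw [eps_smul] at h
  have hs : single σ 1 * f - f ∈ Ideal.span {relEl} := Ideal.Quotient.eq.mp h
  have h2 := span_coeffs hs
  simpa only [grp_sub_apply, act_coeff] using h2

/-- With `G = ℤ/2 × ℤ/2` (generators `α`, `h`) and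
`M = ℤ[G]/(αh − α + h − 1)`: the `G`-fixed points and the `⟨α⟩`-fixed points of `M` are the
`ℤ`-span of `ε(1 + α)`; the `⟨h⟩`-fixed points are the `ℤ`-span of
`{ε(αh − 1), ε(1 + α)}`; and the `⟨αh⟩`-fixed points are the `ℤ`-span of
`{ε(h − 1), ε(1 + α)}`. -/
theorem stmt_13 :
    fixMq ⊤ = AddSubgroup.closure {εq (1 + MonoidAlgebra.single gα 1)} ∧
    fixMq (Subgroup.zpowers gα) = AddSubgroup.closure {εq (1 + MonoidAlgebra.single gα 1)} ∧
    fixMq (Subgroup.zpowers gh) =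
      AddSubgroup.closure
        {εq (MonoidAlgebra.single (gα * gh) 1 - 1), εq (1 + MonoidAlgebra.single gα 1)} ∧
    fixMq (Subgroup.zpowers (gα * gh)) =
      AddSubgroup.closure
        {εq (MonoidAlgebra.single gh 1 - 1), εq (1 + MonoidAlgebra.single gα 1)} := by
  have hα : fixMq (Subgroup.zpowers gα)
      = AddSubgroup.closure {εq (1 + MonoidAlgebra.single gα 1)} := by
    apply le_antisymm
    · intro m hm
      obtain ⟨f, rfl⟩ := Ideal.Quotient.mk_surjective m
      change εq f ∈ _
      have hf : (single gα (1:ℤ) : GrpRing) • εq f = εq f :=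
        mem_fixMq.mp hm gα (Subgroup.mem_zpowers gα)
      obtain ⟨h1, h2, h3⟩ := fix_coeffs hf
      simp only [mul_one, show gα*gα = (1:KleinFour) by decide,
        show gα*(gα*gh) = gh by decide] at h1 h2 h3
      rw [AddSubgroup.mem_closure_singleton]
      refine ⟨f.coeff 1 + f.coeff (gα*gh), ?_⟩
      rw [eps_rep f, map_add, map_one εq,
        show f.coeff gα + f.coeff (gα*gh) = f.coeff 1 + f.coeff (gα*gh) by omega,
        show f.coeff gh - f.coeff (gα*gh) = 0 by omega, zero_smul, add_zero, smul_add]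
    · refine (AddSubgroup.closure_le _).mpr ?_
      intro x hx
      rw [Set.mem_singleton_iff] at hx
      subst hx
      exact mem_fix_zpowers (by decide) fix_v_a
  have hh : fixMq (Subgroup.zpowers gh) =
      AddSubgroup.closure
        {εq (MonoidAlgebra.single (gα * gh) 1 - 1), εq (1 + MonoidAlgebra.single gα 1)} := by
    apply le_antisymm
    · intro m hm
      obtain ⟨f, rfl⟩ := Ideal.Quotient.mk_surjective m
      change εq f ∈ _
      have hf : (single gh (1:ℤ) : GrpRing) • εq f = εq f :=
        mem_fixMq.mp hm gh (Subgroup.mem_zpowers gh)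
      obtain ⟨h1, h2, h3⟩ := fix_coeffs hf
      simp only [mul_one, show gh*gα = gα*gh by decide, show gh*gh = (1:KleinFour) by decide,
        show gh*(gα*gh) = gα by decide] at h1 h2 h3
      rw [eps_rep f]
      have hrep : (f.coeff 1 + f.coeff (gα*gh)) • (1:Mq) + (f.coeff gα + f.coeff (gα*gh)) • εq (single gα 1)
            + (f.coeff gh - f.coeff (gα*gh)) • εq (single gh 1)
          = (-(f.coeff gh - f.coeff (gα*gh))) • εq (single (gα*gh) 1 - 1)
            + ((f.coeff gα + f.coeff (gα*gh)) + (f.coeff gh - f.coeff (gα*gh))) • εq (1 + single gα 1) := by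
        rw [map_sub, map_one εq, map_add, map_one εq, eps_single_aha,
          show f.coeff 1 + f.coeff (gα*gh) = (f.coeff gα + f.coeff (gα*gh)) + (f.coeff gh - f.coeff (gα*gh)) by omega]
        module
      rw [hrep]
      exact AddSubgroup.add_mem _
        (AddSubgroup.zsmul_mem _ (AddSubgroup.subset_closure (by simp)) _)
        (AddSubgroup.zsmul_mem _ (AddSubgroup.subset_closure (by simp)) _)
    · refine (AddSubgroup.closure_le _).mpr ?_
      intro x hx
      rcases hx with rfl | hx
      · exact mem_fix_zpowers (by decide) fix_u_h
      · rw [Set.mem_singleton_iff] at hx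
        subst hx
        exact mem_fix_zpowers (by decide) fix_v_h
  have hah : fixMq (Subgroup.zpowers (gα * gh)) =
      AddSubgroup.closure
        {εq (MonoidAlgebra.single gh 1 - 1), εq (1 + MonoidAlgebra.single gα 1)} := by
    apply le_antisymm
    · intro m hm
      obtain ⟨f, rfl⟩ := Ideal.Quotient.mk_surjective m
      change εq f ∈ _
      have hf : (single (gα*gh) (1:ℤ) : GrpRing) • εq f = εq f :=
        mem_fixMq.mp hm (gα*gh) (Subgroup.mem_zpowers _)
      obtain ⟨h1, h2, h3⟩ := fix_coeffs hf
      simp only [mul_one, show (gα*gh)*gα = gh by decide, show (gα*gh)*gh = gα by decide,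
        show (gα*gh)*(gα*gh) = (1:KleinFour) by decide] at h1 h2 h3
      rw [eps_rep f]
      have hrep : (f.coeff 1 + f.coeff (gα*gh)) • (1:Mq) + (f.coeff gα + f.coeff (gα*gh)) • εq (single gα 1)
            + (f.coeff gh - f.coeff (gα*gh)) • εq (single gh 1)
          = (f.coeff gh - f.coeff (gα*gh)) • εq (single gh 1 - 1)
            + (f.coeff gα + f.coeff (gα*gh)) • εq (1 + single gα 1) := by
        rw [map_sub, map_one εq, map_add, map_one εq,
          show f.coeff 1 + f.coeff (gα*gh) = (f.coeff gα + f.coeff (gα*gh)) - (f.coeff gh - f.coeff (gα*gh)) by omega]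
        module
      rw [hrep]
      exact AddSubgroup.add_mem _
        (AddSubgroup.zsmul_mem _ (AddSubgroup.subset_closure (by simp)) _)
        (AddSubgroup.zsmul_mem _ (AddSubgroup.subset_closure (by simp)) _)
    · refine (AddSubgroup.closure_le _).mpr ?_
      intro x hx
      rcases hx with rfl | hx
      · exact mem_fix_zpowers (by decide) fix_u_ah
      · rw [Set.mem_singleton_iff] at hx
        subst hx
        exact mem_fix_zpowers (by decide) fix_v_ah
  have htop : fixMq ⊤ = AddSubgroup.closure {εq (1 + MonoidAlgebra.single gα 1)} := by
    apply le_antisymm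
    · intro m hm
      have : m ∈ fixMq (Subgroup.zpowers gα) := by
        rw [mem_fixMq]
        intro σ _
        exact mem_fixMq.mp hm σ trivial
      rwa [hα] at this
    · refine (AddSubgroup.closure_le _).mpr ?_
      intro x hx
      rw [Set.mem_singleton_iff] at hx
      subst hx
      rw [SetLike.mem_coe, mem_fixMq]
      intro σ _
      rcases klein_cases σ with rfl|rfl|rfl|rfl
      · rw [← one_def, one_smul]
      · exact fix_v_a
      · exact fix_v_h
      · exact fix_v_ah
  exact ⟨htop, hα, hh, hah⟩
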